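/- arXiv:1906.02838 — 2 statements merged into one kernel-verified Lean document; each statement's English description precedes it below -/
import Mathlib

section
/- Let P₀, P₁ be mutually absolutely continuous probability measures, let F₀ be the c.d.f. of log(dP₀/dP₁) under P₀ and F₁ the c.d.f. of log(dP₁/dP₀) under P₁. Then the perfected c.d.f. F̃₁(a) = F₁(a) + e^{a} ∫_{(a,∞)} e^{−u} dF₁(u) satisfies F̃₁(a) = ∫_{−a}^{∞} F₀(v) e^{−v} dv for all a ∈ ℝ. -/
open MeasureTheory Set

lemma exp_min_lintegral (a c : ℝ) :
    ∫⁻ u in Set.Iic c ∩ Set.Iio a, ENNReal.ofReal (Real.exp u)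
      = ENNReal.ofReal (Real.exp (min a c)) := by
  have hIic : ∀ b : ℝ, ∫⁻ u in Set.Iic b, ENNReal.ofReal (Real.exp u)
      = ENNReal.ofReal (Real.exp b) := by
    intro b
    rw [← ofReal_integral_eq_lintegral_ofReal (integrableOn_exp_Iic b)
      (Filter.Eventually.of_forall fun x => (Real.exp_pos x).le), integral_exp_Iic]
  rcases le_or_gt a c with h | h
  · have hset : Set.Iic c ∩ Set.Iio a = Set.Iio a :=
      Set.inter_eq_self_of_subset_right fun x hx => le_trans hx.le h
    rw [hset, setLIntegral_congr Iio_ae_eq_Iic, hIic, min_eq_left h]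
  · have hset : Set.Iic c ∩ Set.Iio a = Set.Iic c :=
      Set.inter_eq_self_of_subset_left fun x hx => lt_of_le_of_lt hx h
    rw [hset, hIic, min_eq_right h.le]

/-- Let `F₀` be the c.d.f. of `log (dP₀/dP₁)` under `P₀` and `F₁` the c.d.f. of
`log (dP₁/dP₀)` under `P₁`, for mutually absolutely continuous probability measures.
Then `F̃₁(a) = F₁(a) + e^a ∫_{(a,∞)} e^{−u} dF₁(u) = ∫_{−a}^∞ F₀(v) e^{−v} dv`. -/
theorem stmt_16 {Ω : Type*} [MeasurableSpace Ω] (P₀ P₁ : Measure Ω)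
    [IsProbabilityMeasure P₀] [IsProbabilityMeasure P₁]
    (h01 : P₀ ≪ P₁) (h10 : P₁ ≪ P₀) (a : ℝ) :
    (P₁ {ω | Real.log ((P₁.rnDeriv P₀ ω).toReal) ≤ a}).toReal
      + Real.exp a *
        ∫ u in Set.Ioi a, Real.exp (-u)
          ∂(P₁.map fun ω => Real.log ((P₁.rnDeriv P₀ ω).toReal))
    = ∫ v in Set.Ioi (-a),
        (P₀ {ω | Real.log ((P₀.rnDeriv P₁ ω).toReal) ≤ v}).toReal * Real.exp (-v) := by
  set X : Ω → ℝ := fun ω => Real.log ((P₁.rnDeriv P₀ ω).toReal) with hXdef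
  have hX : Measurable X :=
    Real.measurable_log.comp (Measure.measurable_rnDeriv P₁ P₀).ennreal_toReal
  have hs : MeasurableSet {ω | X ω ≤ a} := hX measurableSet_Iic
  -- rnDeriv = ofReal (exp (X ω)) a.e. P₀
  have hae : ∀ᵐ ω ∂P₀, P₁.rnDeriv P₀ ω = ENNReal.ofReal (Real.exp (X ω)) := by
    filter_upwards [Measure.rnDeriv_pos' h01, Measure.rnDeriv_lt_top P₁ P₀] with ω h0 htop
    have ht : 0 < (P₁.rnDeriv P₀ ω).toReal := ENNReal.toReal_pos h0.ne' htop.ne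
    rw [hXdef]
    simp only
    rw [Real.exp_log ht, ENNReal.ofReal_toReal htop.ne]
  -- log of the other rnDeriv is -X a.e. P₀
  have hY : (fun ω => Real.log ((P₀.rnDeriv P₁ ω).toReal)) =ᵐ[P₀] fun ω => -X ω := by
    filter_upwards [Measure.inv_rnDeriv h01] with ω h
    have h2 : P₀.rnDeriv P₁ ω = (P₁.rnDeriv P₀ ω)⁻¹ := by
      rw [← h]; simp
    rw [h2, ENNReal.toReal_inv, Real.log_inv]
  -- L1
  have L1 : P₁ {ω | X ω ≤ a}
      = ∫⁻ ω in {ω | X ω ≤ a}, ENNReal.ofReal (Real.exp (X ω)) ∂P₀ := by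
    rw [← Measure.setLIntegral_rnDeriv h10]
    exact lintegral_congr_ae (ae_restrict_of_ae hae)
  -- L2
  have L2 : ∫⁻ ω in {ω | X ω ≤ a}ᶜ, ENNReal.ofReal (Real.exp (-X ω)) ∂P₁
      = P₀ ({ω | X ω ≤ a}ᶜ) := by
    have hf : Measurable fun ω => ENNReal.ofReal (Real.exp (-X ω)) :=
      (show Measurable fun ω => Real.exp (-X ω) from
        Real.measurable_exp.comp hX.neg).ennreal_ofReal
    rw [← setLIntegral_rnDeriv_mul h10 hf.aemeasurable hs.compl]
    have : ∀ᵐ ω ∂P₀,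
        P₁.rnDeriv P₀ ω * ENNReal.ofReal (Real.exp (-X ω)) = 1 := by
      filter_upwards [hae] with ω h
      rw [h, ← ENNReal.ofReal_mul (Real.exp_pos _).le, ← Real.exp_add, add_neg_cancel,
        Real.exp_zero, ENNReal.ofReal_one]
    rw [lintegral_congr_ae (ae_restrict_of_ae this), setLIntegral_one]
  -- Fubini
  have key : ∫⁻ u in Set.Iio a, P₀ {ω | u ≤ X ω} * ENNReal.ofReal (Real.exp u)
      = ∫⁻ ω, ENNReal.ofReal (Real.exp (min a (X ω))) ∂P₀ := by
    have hS : MeasurableSet {p : ℝ × Ω | p.1 ≤ X p.2} :=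
      measurableSet_le measurable_fst (hX.comp measurable_snd)
    calc ∫⁻ u in Set.Iio a, P₀ {ω | u ≤ X ω} * ENNReal.ofReal (Real.exp u)
        = ∫⁻ u in Set.Iio a,
            ∫⁻ ω, (if u ≤ X ω then ENNReal.ofReal (Real.exp u) else 0) ∂P₀ := by
          refine lintegral_congr fun u => ?_
          have hsu : MeasurableSet {ω | u ≤ X ω} := hX measurableSet_Ici
          have h1 : (fun ω => if u ≤ X ω then ENNReal.ofReal (Real.exp u) else 0)
              = {ω | u ≤ X ω}.indicator (fun _ => ENNReal.ofReal (Real.exp u)) := by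
            ext ω; simp [Set.indicator_apply]
          rw [h1, lintegral_indicator hsu, setLIntegral_const, mul_comm]
      _ = ∫⁻ ω, (∫⁻ u in Set.Iio a,
            (if u ≤ X ω then ENNReal.ofReal (Real.exp u) else 0)) ∂P₀ := by
          refine lintegral_lintegral_swap ?_
          exact (Measurable.ite hS
            (ENNReal.measurable_ofReal.comp (Real.measurable_exp.comp measurable_fst))
            measurable_const).aemeasurable
      _ = ∫⁻ ω, ENNReal.ofReal (Real.exp (min a (X ω))) ∂P₀ := by
          refine lintegral_congr fun ω => ?_
          have h2 : (fun u => if u ≤ X ω then ENNReal.ofReal (Real.exp u) else 0)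
              = (Set.Iic (X ω)).indicator (fun u => ENNReal.ofReal (Real.exp u)) := by
            ext u; simp [Set.indicator_apply, Set.mem_Iic]
          rw [h2, lintegral_indicator measurableSet_Iic,
            Measure.restrict_restrict measurableSet_Iic]
          exact exp_min_lintegral a (X ω)
  -- split
  have hsplit : ∫⁻ ω, ENNReal.ofReal (Real.exp (min a (X ω))) ∂P₀
      = P₁ {ω | X ω ≤ a} + ENNReal.ofReal (Real.exp a) * P₀ ({ω | X ω ≤ a}ᶜ) := by
    rw [← lintegral_add_compl (fun ω => ENNReal.ofReal (Real.exp (min a (X ω)))) hs, L1]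
    congr 1
    · exact setLIntegral_congr_fun hs (fun ω hω => by
        rw [min_eq_right hω])
    · have h2 : ∀ ω ∈ {ω | X ω ≤ a}ᶜ,
          ENNReal.ofReal (Real.exp (min a (X ω))) = ENNReal.ofReal (Real.exp a) := by
        intro ω hω
        simp only [Set.mem_compl_iff, Set.mem_setOf_eq, not_le] at hω
        rw [min_eq_left hω.le]
      rw [setLIntegral_congr_fun hs.compl h2, setLIntegral_const]
  -- change of variables in the RHS
  have hchange : ∫⁻ v in Set.Ioi (-a), P₀ {ω | -v ≤ X ω} * ENNReal.ofReal (Real.exp (-v))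
      = ∫⁻ u in Set.Iio a, P₀ {ω | u ≤ X ω} * ENNReal.ofReal (Real.exp u) := by
    have hmono : Monotone fun v : ℝ => P₀ {ω | -v ≤ X ω} := fun v w hvw =>
      measure_mono fun ω h => le_trans (neg_le_neg hvw) h
    have hG : Measurable fun v : ℝ => P₀ {ω | -v ≤ X ω} * ENNReal.ofReal (Real.exp (-v)) :=
      hmono.measurable.mul ((Real.measurable_exp.comp measurable_neg).ennreal_ofReal)
    have hneg : Measure.map Neg.neg (volume : Measure ℝ) = volume :=
      (Measure.measurePreserving_neg _).map_eq
    have hpre : Neg.neg ⁻¹' Set.Ioi (-a) = Set.Iio a := by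
      ext u; simp
    have h3 := lintegral_map (μ := volume.restrict (Neg.neg ⁻¹' Set.Ioi (-a))) hG measurable_neg
    rw [← Measure.restrict_map measurable_neg measurableSet_Ioi, hneg, hpre] at h3
    rw [h3]
    simp only [neg_neg]
  -- the second summand of the LHS
  have hmap : (P₁.map X).restrict (Set.Ioi a) = (P₁.restrict (X ⁻¹' Set.Ioi a)).map X :=
    Measure.restrict_map hX measurableSet_Ioi
  have hcompl : X ⁻¹' Set.Ioi a = {ω | X ω ≤ a}ᶜ := by
    ext ω; simp [not_le]
  have hT : ∫ u in Set.Ioi a, Real.exp (-u) ∂(P₁.map X)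
      = (P₀ ({ω | X ω ≤ a}ᶜ)).toReal := by
    have hm1 : Measurable fun u : ℝ => Real.exp (-u) :=
      Real.measurable_exp.comp measurable_neg
    have hm2 : Measurable fun ω => Real.exp (-X ω) :=
      Real.measurable_exp.comp hX.neg
    rw [hmap, integral_map hX.aemeasurable hm1.aestronglyMeasurable,
      integral_eq_lintegral_of_nonneg_ae
        (Filter.Eventually.of_forall fun ω => (Real.exp_pos _).le)
        hm2.aestronglyMeasurable, hcompl, L2]
  -- the RHS as a lintegral
  have hF0 : ∀ v : ℝ, P₀ {ω | Real.log ((P₀.rnDeriv P₁ ω).toReal) ≤ v}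
      = P₀ {ω | -v ≤ X ω} := by
    intro v
    refine measure_congr (Filter.eventuallyEq_set.mpr ?_)
    filter_upwards [hY] with ω h
    simp only [Set.mem_setOf_eq, h, neg_le]
  have hRmeas : Measurable fun v : ℝ =>
      (P₀ {ω | Real.log ((P₀.rnDeriv P₁ ω).toReal) ≤ v}).toReal := by
    have : Monotone fun v : ℝ =>
        (P₀ {ω | Real.log ((P₀.rnDeriv P₁ ω).toReal) ≤ v}).toReal := fun v w hvw =>
      ENNReal.toReal_mono (measure_ne_top _ _)
        (measure_mono fun ω h => le_trans h hvw)
    exact this.measurable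
  have hRHS : ∫ v in Set.Ioi (-a),
      (P₀ {ω | Real.log ((P₀.rnDeriv P₁ ω).toReal) ≤ v}).toReal * Real.exp (-v)
      = (∫⁻ v in Set.Ioi (-a),
          P₀ {ω | -v ≤ X ω} * ENNReal.ofReal (Real.exp (-v))).toReal := by
    rw [integral_eq_lintegral_of_nonneg_ae
      (Filter.Eventually.of_forall fun v =>
        mul_nonneg ENNReal.toReal_nonneg (Real.exp_pos _).le)
      ((hRmeas.mul (show Measurable fun v : ℝ => Real.exp (-v) from
        Real.measurable_exp.comp measurable_neg)).aestronglyMeasurable)]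
    congr 1
    refine lintegral_congr fun v => ?_
    rw [ENNReal.ofReal_mul ENNReal.toReal_nonneg,
      ENNReal.ofReal_toReal (measure_ne_top _ _), hF0 v]
  -- assemble
  rw [hT, hRHS, hchange, key, hsplit, ENNReal.toReal_add (measure_ne_top _ _)
    (ENNReal.mul_ne_top ENNReal.ofReal_ne_top (measure_ne_top _ _)),
    ENNReal.toReal_mul, ENNReal.toReal_ofReal (Real.exp_pos _).le]
end

section
/- Let k ≥ 1 and α₀, α₁, …, α_k ∈ ℝ with α₀ + α₁ + ⋯ + α_k = 1 and α₀ > 0. Define v(p) = ∏_{i=0}^{k} p_i^{α_i} on the set of p = (p₀,…,p_k) with all p_i > 0. Then: (a) if α₁, …, α_k ≤ 0, v is convex on {p : p ≫ 0}; (b) if α₁, …, α_k ≥ 0, v is concave; (c) if α₁, …, α_k < 0, v is strictly convex when restricted to the interior of the simplex {p ≫ 0 : Σ p_i = 1}. -/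
/-!
Since `∑ i, α i = 1`, `v p = ∏ i, p i ^ α i` is positively homogeneous of degree one, so by
Euler's identity its tangent functional at `m`, `p ↦ v m * ∑ i, α i * (p i / m i)`, takes the
value `v m` at `m`. Hence `v` is convex (concave) as soon as every tangent functional lies below
(above) `v`, and strictly convex if it lies strictly below away from `m`. With `r = p / m` and
`v p = v m * v r` this is the inequality `∑ i, α i * r i ≤ ∏ i, r i ^ α i` (resp. `≥`). For
nonnegative `α` the latter is weighted AM–GM. When `α 0` is the only positive exponent, the
former is weighted AM–GM too, after solving `v r = ∏ i, r i ^ α i` for `r 0`; it is strict unless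
`r` is constant, which on the simplex means `p = m`.
-/

theorem ne_add_smul_of_ne {𝕜 E : Type*} [Field 𝕜] [AddCommGroup E] [Module 𝕜 E] {x y : E}
    {a b : 𝕜} (hxy : x ≠ y) (hb : b ≠ 0) (hab : a + b = 1) :
    x ≠ a • x + b • y := by
  intro h
  have : b • (y - x) = 0 := by linear_combination (norm := module) -h - hab • x
  exact hxy (sub_eq_zero.1 ((smul_eq_zero.1 this).resolve_left hb)).symm

section SupportingLinearMap

variable {𝕜 E : Type*} [Field 𝕜] [LinearOrder 𝕜] [IsStrictOrderedRing 𝕜] [AddCommGroup E]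
  [Module 𝕜 E] {s : Set E} {f : E → 𝕜}

theorem convexOn_of_exists_linearMap_le (hs : Convex 𝕜 s)
    (h : ∀ m ∈ s, ∃ L : E →ₗ[𝕜] 𝕜, L m = f m ∧ ∀ x ∈ s, L x ≤ f x) : ConvexOn 𝕜 s f := by
  refine ⟨hs, fun x hx y hy a b ha hb hab => ?_⟩
  obtain ⟨L, hLm, hL⟩ := h _ (hs hx hy ha hb hab)
  rw [← hLm, map_add, map_smul, map_smul]
  exact add_le_add (smul_le_smul_of_nonneg_left (hL x hx) ha)
    (smul_le_smul_of_nonneg_left (hL y hy) hb)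

theorem concaveOn_of_exists_le_linearMap (hs : Convex 𝕜 s)
    (h : ∀ m ∈ s, ∃ L : E →ₗ[𝕜] 𝕜, L m = f m ∧ ∀ x ∈ s, f x ≤ L x) : ConcaveOn 𝕜 s f := by
  refine ⟨hs, fun x hx y hy a b ha hb hab => ?_⟩
  obtain ⟨L, hLm, hL⟩ := h _ (hs hx hy ha hb hab)
  rw [← hLm, map_add, map_smul, map_smul]
  exact add_le_add (smul_le_smul_of_nonneg_left (hL x hx) ha)
    (smul_le_smul_of_nonneg_left (hL y hy) hb)

theorem strictConvexOn_of_exists_linearMap_lt (hs : Convex 𝕜 s)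
    (h : ∀ m ∈ s, ∃ L : E →ₗ[𝕜] 𝕜, L m = f m ∧ ∀ x ∈ s, x ≠ m → L x < f x) :
    StrictConvexOn 𝕜 s f := by
  refine ⟨hs, fun x hx y hy hxy a b ha hb hab => ?_⟩
  obtain ⟨L, hLm, hL⟩ := h _ (hs hx hy ha.le hb.le hab)
  have hx_ne : x ≠ a • x + b • y := ne_add_smul_of_ne hxy hb.ne' hab
  have hy_ne : y ≠ a • x + b • y := by
    rw [add_comm]; exact ne_add_smul_of_ne hxy.symm ha.ne' (by rwa [add_comm])
  rw [← hLm, map_add, map_smul, map_smul]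
  exact add_lt_add (smul_lt_smul_of_pos_left (hL x hx hx_ne) ha)
    (smul_lt_smul_of_pos_left (hL y hy hy_ne) hb)

end SupportingLinearMap

section ReverseAMGM

variable {n : ℕ} {α r : Fin (n + 1) → ℝ}

-- Solving `∏ i, r i ^ α i = G` for `r 0` gives
-- `r 0 = G ^ (1 / α 0) * ∏ i, r i.succ ^ (-α i.succ / α 0)`: a weighted geometric mean of the
-- points below with the weights below, which are nonnegative when `α i ≤ 0` for `i ≠ 0`.
noncomputable def reverseWeights (α : Fin (n + 1) → ℝ) : Fin (n + 1) → ℝ :=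
  Fin.cons (α 0)⁻¹ fun i => -α i.succ / α 0

noncomputable def reversePoints (α r : Fin (n + 1) → ℝ) : Fin (n + 1) → ℝ :=
  Fin.cons (∏ i, r i ^ α i) fun i => r i.succ

theorem sum_reverseWeights (hsum : ∑ i, α i = 1) (h0 : α 0 ≠ 0) :
    ∑ i, reverseWeights α i = 1 := by
  rw [Fin.sum_univ_succ] at hsum ⊢
  simp only [reverseWeights, Fin.cons_zero, Fin.cons_succ, ← Finset.sum_div,
    Finset.sum_neg_distrib]
  field_simp
  linarith

theorem reversePoints_pos (hr : ∀ i, 0 < r i) (i : Fin (n + 1)) : 0 < reversePoints α r i := by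
  cases i using Fin.cases with
  | zero =>
    rw [reversePoints, Fin.cons_zero]
    exact Finset.prod_pos fun j _ => Real.rpow_pos_of_pos (hr j) (α j)
  | succ j => rw [reversePoints, Fin.cons_succ]; exact hr j.succ

theorem prod_reversePoints_rpow (h0 : α 0 ≠ 0) (hr : ∀ i, 0 < r i) :
    ∏ i, reversePoints α r i ^ reverseWeights α i = r 0 := by
  rw [← Real.exp_log (hr 0), ← Real.exp_log (Finset.prod_pos fun i _ =>
    Real.rpow_pos_of_pos (reversePoints_pos hr i) _), Real.log_prod fun i _ =>
    (Real.rpow_pos_of_pos (reversePoints_pos hr i) _).ne']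
  congr 1
  simp only [Real.log_rpow (reversePoints_pos hr _)]
  rw [Fin.sum_univ_succ]
  simp only [reverseWeights, reversePoints, Fin.cons_zero, Fin.cons_succ]
  rw [Real.log_prod fun i _ => (Real.rpow_pos_of_pos (hr i) _).ne', Fin.sum_univ_succ]
  simp only [Real.log_rpow (hr _)]
  rw [mul_add, inv_mul_cancel_left₀ h0, Finset.mul_sum, add_assoc, ← Finset.sum_add_distrib]
  simp only [neg_div, neg_mul, inv_mul_eq_div, div_mul_eq_mul_div, add_neg_cancel,
    Finset.sum_const_zero, add_zero]

theorem reverseWeights_nonneg (h0 : 0 < α 0) (hα : ∀ i, i ≠ 0 → α i ≤ 0) (i : Fin (n + 1)) :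
    0 ≤ reverseWeights α i := by
  cases i using Fin.cases with
  | zero => rw [reverseWeights, Fin.cons_zero]; positivity
  | succ j =>
    rw [reverseWeights, Fin.cons_succ]
    exact div_nonneg (neg_nonneg.2 (hα _ j.succ_ne_zero)) h0.le

theorem reverseWeights_pos (h0 : 0 < α 0) (hα : ∀ i, i ≠ 0 → α i < 0) (i : Fin (n + 1)) :
    0 < reverseWeights α i := by
  cases i using Fin.cases with
  | zero => rw [reverseWeights, Fin.cons_zero]; positivity
  | succ j =>
    rw [reverseWeights, Fin.cons_succ]
    exact div_pos (neg_pos.2 (hα _ j.succ_ne_zero)) h0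

theorem prod_rpow_sub_sum_mul_eq (h0 : α 0 ≠ 0) (hr : ∀ i, 0 < r i) :
    ∏ i, r i ^ α i - ∑ i, α i * r i = α 0 * (∑ i, reverseWeights α i * reversePoints α r i -
      ∏ i, reversePoints α r i ^ reverseWeights α i) := by
  rw [prod_reversePoints_rpow h0 hr, Fin.sum_univ_succ, Fin.sum_univ_succ]
  simp only [reverseWeights, reversePoints, Fin.cons_zero, Fin.cons_succ]
  rw [mul_sub, mul_add, Finset.mul_sum]
  field_simp
  rw [Finset.sum_neg_distrib]
  ring

theorem exists_reversePoints_ne (hsum : ∑ i, α i = 1) (h0 : α 0 ≠ 0) (hr : ∀ i, 0 < r i)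
    (hne : ∃ i j, r i ≠ r j) : ∃ i j, reversePoints α r i ≠ reversePoints α r j := by
  by_contra! h
  have hconst : ∀ i, r i = reversePoints α r 0 := by
    intro i
    cases i using Fin.cases with
    | zero =>
      rw [← prod_reversePoints_rpow h0 hr, Finset.prod_congr rfl fun i _ => by rw [h i 0],
        ← Real.rpow_sum_of_pos (reversePoints_pos hr 0), sum_reverseWeights hsum h0,
        Real.rpow_one]
    | succ j => simpa [reversePoints] using h j.succ 0
  obtain ⟨i, j, hij⟩ := hne
  exact hij ((hconst i).trans (hconst j).symm)

theorem sum_mul_le_prod_rpow_of_nonpos (hsum : ∑ i, α i = 1) (h0 : 0 < α 0)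
    (hα : ∀ i, i ≠ 0 → α i ≤ 0) (hr : ∀ i, 0 < r i) : ∑ i, α i * r i ≤ ∏ i, r i ^ α i := by
  rw [← sub_nonneg, prod_rpow_sub_sum_mul_eq h0.ne' hr]
  exact mul_nonneg h0.le <| sub_nonneg.2 <| Real.geom_mean_le_arith_mean_weighted _ _ _
    (fun i _ => reverseWeights_nonneg h0 hα i) (sum_reverseWeights hsum h0.ne')
    fun i _ => (reversePoints_pos hr i).le

theorem sum_mul_lt_prod_rpow_of_neg (hsum : ∑ i, α i = 1) (h0 : 0 < α 0)
    (hα : ∀ i, i ≠ 0 → α i < 0) (hr : ∀ i, 0 < r i) (hne : ∃ i j, r i ≠ r j) :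
    ∑ i, α i * r i < ∏ i, r i ^ α i := by
  obtain ⟨i, j, hij⟩ := exists_reversePoints_ne hsum h0.ne' hr hne
  rw [← sub_pos, prod_rpow_sub_sum_mul_eq h0.ne' hr]
  exact mul_pos h0 <| sub_pos.2 <| (Real.geom_mean_lt_arith_mean_weighted_iff_of_pos _ _ _
    (fun i _ => reverseWeights_pos h0 hα i) (sum_reverseWeights hsum h0.ne')
    fun i _ => (reversePoints_pos hr i).le).2 ⟨i, Finset.mem_univ _, j, Finset.mem_univ _, hij⟩

end ReverseAMGM

section RpowProd

variable {ι : Type*} [Fintype ι] {α m p : ι → ℝ}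

/-- The derivative of `p ↦ ∏ i, p i ^ α i` at `m`. -/
noncomputable def rpowProdTangent (α m : ι → ℝ) : (ι → ℝ) →ₗ[ℝ] ℝ :=
  Fintype.linearCombination ℝ fun i => (∏ j, m j ^ α j) * (α i / m i)

theorem rpowProdTangent_apply (α m p : ι → ℝ) :
    rpowProdTangent α m p = (∏ j, m j ^ α j) * ∑ i, α i * (p i / m i) := by
  rw [rpowProdTangent, Fintype.linearCombination_apply, Finset.mul_sum]
  exact Finset.sum_congr rfl fun i _ => by rw [smul_eq_mul]; ring

theorem rpowProdTangent_self (hsum : ∑ i, α i = 1) (hm : ∀ i, 0 < m i) :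
    rpowProdTangent α m m = ∏ i, m i ^ α i := by
  rw [rpowProdTangent_apply,
    Finset.sum_congr rfl fun i _ => by rw [div_self (hm i).ne', mul_one], hsum, mul_one]

theorem prod_rpow_eq_mul_prod_div_rpow (hm : ∀ i, 0 < m i) (hp : ∀ i, 0 < p i) :
    ∏ i, p i ^ α i = (∏ i, m i ^ α i) * ∏ i, (p i / m i) ^ α i := by
  have hvm : ∏ i, m i ^ α i ≠ 0 :=
    Finset.prod_ne_zero_iff.2 fun i _ => (Real.rpow_pos_of_pos (hm i) _).ne'
  have hdiv : ∏ i, (p i / m i) ^ α i = (∏ i, p i ^ α i) / ∏ i, m i ^ α i := by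
    rw [← Finset.prod_div_distrib]
    exact Finset.prod_congr rfl fun i _ => Real.div_rpow (hp i).le (hm i).le (α i)
  rw [hdiv, mul_div_cancel₀ _ hvm]

theorem le_rpowProdTangent_of_nonneg (hsum : ∑ i, α i = 1) (hα : ∀ i, 0 ≤ α i)
    (hm : ∀ i, 0 < m i) (hp : ∀ i, 0 < p i) : ∏ i, p i ^ α i ≤ rpowProdTangent α m p := by
  rw [rpowProdTangent_apply, prod_rpow_eq_mul_prod_div_rpow hm hp]
  exact mul_le_mul_of_nonneg_left
    (Real.geom_mean_le_arith_mean_weighted _ α _ (fun i _ => hα i) hsum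
      fun i _ => (div_pos (hp i) (hm i)).le)
    (Finset.prod_nonneg fun i _ => (Real.rpow_pos_of_pos (hm i) _).le)

end RpowProd

theorem rpowProdTangent_le_of_nonpos {n : ℕ} {α m p : Fin (n + 1) → ℝ} (hsum : ∑ i, α i = 1)
    (h0 : 0 < α 0) (hα : ∀ i, i ≠ 0 → α i ≤ 0) (hm : ∀ i, 0 < m i) (hp : ∀ i, 0 < p i) :
    rpowProdTangent α m p ≤ ∏ i, p i ^ α i := by
  rw [rpowProdTangent_apply, prod_rpow_eq_mul_prod_div_rpow hm hp]
  exact mul_le_mul_of_nonneg_left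
    (sum_mul_le_prod_rpow_of_nonpos hsum h0 hα fun i => div_pos (hp i) (hm i))
    (Finset.prod_nonneg fun i _ => (Real.rpow_pos_of_pos (hm i) _).le)

theorem rpowProdTangent_lt_of_neg {n : ℕ} {α m p : Fin (n + 1) → ℝ} (hsum : ∑ i, α i = 1)
    (h0 : 0 < α 0) (hα : ∀ i, i ≠ 0 → α i < 0) (hm : ∀ i, 0 < m i) (hp : ∀ i, 0 < p i)
    (hne : ∃ i j, p i / m i ≠ p j / m j) :
    rpowProdTangent α m p < ∏ i, p i ^ α i := by
  rw [rpowProdTangent_apply, prod_rpow_eq_mul_prod_div_rpow hm hp]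
  exact mul_lt_mul_of_pos_left
    (sum_mul_lt_prod_rpow_of_neg hsum h0 hα (fun i => div_pos (hp i) (hm i)) hne)
    (Finset.prod_pos fun i _ => Real.rpow_pos_of_pos (hm i) _)

theorem exists_div_ne_div_of_ne {ι : Type*} [Fintype ι] {p m : ι → ℝ}
    (hsum : ∑ i, p i = ∑ i, m i) (hm : ∀ i, 0 < m i) (hpm : p ≠ m) :
    ∃ i j, p i / m i ≠ p j / m j := by
  obtain ⟨i, hi⟩ := Function.ne_iff.1 hpm
  by_contra! h
  have hp : ∀ j, p j = p i / m i * m j := fun j => by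
    rw [← h j i, div_mul_cancel₀ _ (hm j).ne']
  have hc : p i / m i = 1 := by
    rw [Finset.sum_congr rfl fun j _ => hp j, ← Finset.mul_sum] at hsum
    exact (mul_eq_right₀ (Finset.sum_pos (fun j _ => hm j) ⟨i, Finset.mem_univ i⟩).ne').1 hsum
  exact hi (by rw [hp i, hc, one_mul])

theorem stmt_19_general (k : ℕ) (α : Fin (k + 1) → ℝ)
    (hsum : ∑ i : Fin (k + 1), α i = 1) (hα₀ : 0 < α 0) :
    ((∀ i : Fin (k + 1), i ≠ 0 → α i ≤ 0) →
      ConvexOn ℝ {p : Fin (k + 1) → ℝ | ∀ i, 0 < p i}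
        (fun p => ∏ i : Fin (k + 1), p i ^ α i))
    ∧ ((∀ i : Fin (k + 1), i ≠ 0 → 0 ≤ α i) →
      ConcaveOn ℝ {p : Fin (k + 1) → ℝ | ∀ i, 0 < p i}
        (fun p => ∏ i : Fin (k + 1), p i ^ α i))
    ∧ ((∀ i : Fin (k + 1), i ≠ 0 → α i < 0) →
      StrictConvexOn ℝ
        {p : Fin (k + 1) → ℝ | (∀ i, 0 < p i) ∧ ∑ i : Fin (k + 1), p i = 1}
        (fun p => ∏ i : Fin (k + 1), p i ^ α i)) := by
  have horthant : Convex ℝ {p : Fin (k + 1) → ℝ | ∀ i, 0 < p i} :=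
    fun x hx y hy a b ha hb hab i => convex_Ioi (0 : ℝ) (hx i) (hy i) ha hb hab
  have hsimplex : Convex ℝ {p : Fin (k + 1) → ℝ | (∀ i, 0 < p i) ∧ ∑ i, p i = 1} :=
    fun x hx y hy a b ha hb hab => ⟨horthant hx.1 hy.1 ha hb hab, by
      simp [Finset.sum_add_distrib, ← Finset.mul_sum, hx.2, hy.2, hab]⟩
  refine ⟨fun hneg => ?_, fun hnonneg => ?_, fun hneg => ?_⟩
  · exact convexOn_of_exists_linearMap_le horthant fun m hm =>
      ⟨_, rpowProdTangent_self hsum hm,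
        fun p hp => rpowProdTangent_le_of_nonpos hsum hα₀ hneg hm hp⟩
  · have hα : ∀ i, 0 ≤ α i := fun i => (eq_or_ne i 0).elim (fun h => h ▸ hα₀.le) (hnonneg i)
    exact concaveOn_of_exists_le_linearMap horthant fun m hm =>
      ⟨_, rpowProdTangent_self hsum hm, fun p hp => le_rpowProdTangent_of_nonneg hsum hα hm hp⟩
  · exact strictConvexOn_of_exists_linearMap_lt hsimplex fun m hm =>
      ⟨_, rpowProdTangent_self hsum hm.1, fun p hp hpm => rpowProdTangent_lt_of_neg hsum hα₀ hneg
        hm.1 hp.1 (exists_div_ne_div_of_ne (hp.2.trans hm.2.symm) hm.1 hpm)⟩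

/-- Let `α₀ + α₁ + ⋯ + α_k = 1` with `α₀ > 0`, and `v(p) = ∏ p_i^{α_i}` on the positive
orthant. Then (a) if `α₁, …, α_k ≤ 0`, `v` is convex; (b) if `α₁, …, α_k ≥ 0`, `v` is
concave; (c) if `α₁, …, α_k < 0`, `v` is strictly convex on the interior of the simplex. -/
theorem stmt_19 (k : ℕ) (hk : 1 ≤ k) (α : Fin (k + 1) → ℝ)
    (hsum : ∑ i : Fin (k + 1), α i = 1) (hα₀ : 0 < α 0) :
    ((∀ i : Fin (k + 1), i ≠ 0 → α i ≤ 0) →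
      ConvexOn ℝ {p : Fin (k + 1) → ℝ | ∀ i, 0 < p i}
        (fun p => ∏ i : Fin (k + 1), p i ^ α i))
    ∧ ((∀ i : Fin (k + 1), i ≠ 0 → 0 ≤ α i) →
      ConcaveOn ℝ {p : Fin (k + 1) → ℝ | ∀ i, 0 < p i}
        (fun p => ∏ i : Fin (k + 1), p i ^ α i))
    ∧ ((∀ i : Fin (k + 1), i ≠ 0 → α i < 0) →
      StrictConvexOn ℝ
        {p : Fin (k + 1) → ℝ | (∀ i, 0 < p i) ∧ ∑ i : Fin (k + 1), p i = 1}
        (fun p => ∏ i : Fin (k + 1), p i ^ α i)) :=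
  stmt_19_general k α hsum hα₀
end
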